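/- arXiv:1909.00420 — 4 statements merged into one kernel-verified Lean document; each statement's English description precedes it below -/
import Mathlib

section
/- Let g ≥ 1 and fix a sign ε ∈ {+1, −1}. Let O consist of pairwise distinct symbols e_1, …, e_g, e_{g+1}, ē_1, h¹, e² with class map cl(e_i) = u_i for 1 ≤ i ≤ g, cl(e_{g+1}) = cl(h¹) = w, cl(ē_1) = ε·v_1, and cl(e²) = w − ε·v_1. Suppose S⁺ ⊆ {e_1, …, e_{g+1}} and S⁻ ⊆ {e_1, …, e_{g+1}, ē_1, h¹, e²} are both nonempty and cl(S⁺) = cl(S⁻). Then one of the following holds: (i) S⁻ = S⁺; (ii) e_{g+1} ∈ S⁺ and S⁻ = (S⁺ ∖ {e_{g+1}}) ∪ {h¹}; (iii) e_{g+1} ∈ S⁺ and S⁻ = (S⁺ ∖ {e_{g+1}}) ∪ {ē_1, e²}; or (iv) S⁺ = {e_{g+1}} and S⁻ = {e_1, …, e_g} ∪ X, where X is one of {e_{g+1}, h¹}, {e_{g+1}, ē_1, e²}, {h¹, ē_1, e²}. -/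
/-!
Only two coordinates of the classes matter. The `v₁`-coordinate of `cl S` is
`ε ([ē₁ ∈ S] - [e² ∈ S])`; it vanishes for `S⁺`, so `ē₁` and `e²` lie in `S⁻` together or not
at all. For `j ≤ g` the `u_j`-coordinate is `[e_j ∈ S] - [e_{g+1} ∈ S] - [h¹ ∈ S] - [e² ∈ S]`,
so `[e_j ∈ S⁺] - [e_j ∈ S⁻]` is a shift independent of `j`, hence (as `g ≥ 1`) one of `0, 1, -1`.
Shift `0` means `S⁺` and `S⁻` agree on `e_1, …, e_g`, and counting the remaining orbits gives
cases (i)–(iii); shift `1` would leave `S⁻` empty; shift `-1` puts all of `e_1, …, e_g` into `S⁻`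
and none into `S⁺`, which forces `S⁺ = {e_{g+1}}` and case (iv).
-/

open Finset

section Classification

variable {O : Type*} [DecidableEq O] {E Sp Sm : Finset O} {top h1 ebar e2 : O}

theorem eq_or_exchange_of_forall_mem_iff (hSp : Sp ⊆ insert top E)
    (hSm : Sm ⊆ insert ebar (insert h1 (insert e2 (insert top E))))
    (hpair : ebar ∈ Sm ↔ e2 ∈ Sm) (hE : ∀ x ∈ E, x ∈ Sp ↔ x ∈ Sm)
    (hcount : (if top ∈ Sp then (1 : ℤ) else 0) =
      (if top ∈ Sm then 1 else 0) + (if h1 ∈ Sm then 1 else 0) + (if e2 ∈ Sm then 1 else 0)) :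
    Sm = Sp ∨ (top ∈ Sp ∧ Sm = insert h1 (Sp.erase top))
      ∨ (top ∈ Sp ∧ Sm = insert ebar (insert e2 (Sp.erase top))) := by
  by_cases htopSp : top ∈ Sp <;> by_cases htopSm : top ∈ Sm <;> by_cases hh1 : h1 ∈ Sm <;>
    by_cases he2 : e2 ∈ Sm <;> simp only [htopSp, htopSm, hh1, he2, if_true, if_false] at hcount <;>
    try omega
  · left; ext x; grind
  · right; left; refine ⟨htopSp, ?_⟩; ext x; grind
  · right; right; refine ⟨htopSp, ?_⟩; ext x; grind
  · left; ext x; grind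

theorem eq_singleton_of_forall_not_mem_and_mem (hSp : Sp ⊆ insert top E)
    (hSm : Sm ⊆ insert ebar (insert h1 (insert e2 (insert top E))))
    (hSpne : Sp.Nonempty) (hpair : ebar ∈ Sm ↔ e2 ∈ Sm) (hE : ∀ x ∈ E, x ∉ Sp ∧ x ∈ Sm)
    (hcount : (if top ∈ Sp then (1 : ℤ) else 0) + 1 =
      (if top ∈ Sm then 1 else 0) + (if h1 ∈ Sm then 1 else 0) + (if e2 ∈ Sm then 1 else 0)) :
    Sp = {top} ∧ (Sm = E ∪ {top, h1} ∨ Sm = E ∪ {top, ebar, e2} ∨ Sm = E ∪ {h1, ebar, e2}) := by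
  have hSp_top : Sp = {top} := by
    obtain ⟨y, hy⟩ := hSpne
    ext x; grind
  refine ⟨hSp_top, ?_⟩
  have htopSp : top ∈ Sp := by simp [hSp_top]
  by_cases htopSm : top ∈ Sm <;> by_cases hh1 : h1 ∈ Sm <;> by_cases he2 : e2 ∈ Sm <;>
    simp only [htopSp, htopSm, hh1, he2, if_true, if_false] at hcount <;> try omega
  · left; ext x; simp only [mem_union, mem_insert, mem_singleton]; grind
  · right; left; ext x; simp only [mem_union, mem_insert, mem_singleton]; grind
  · right; right; ext x; simp only [mem_union, mem_insert, mem_singleton]; grind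

theorem classification_of_coordinates (hE : E.Nonempty) (hSp : Sp ⊆ insert top E)
    (hSm : Sm ⊆ insert ebar (insert h1 (insert e2 (insert top E))))
    (hSpne : Sp.Nonempty) (hSmne : Sm.Nonempty) (hpair : ebar ∈ Sm ↔ e2 ∈ Sm)
    (hcoord : ∀ x ∈ E, (if x ∈ Sp then (1 : ℤ) else 0) - (if top ∈ Sp then 1 else 0) =
      (if x ∈ Sm then 1 else 0) - (if top ∈ Sm then 1 else 0) - (if h1 ∈ Sm then 1 else 0)
        - (if e2 ∈ Sm then 1 else 0)) :
    Sm = Sp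
    ∨ (top ∈ Sp ∧ Sm = insert h1 (Sp.erase top))
    ∨ (top ∈ Sp ∧ Sm = insert ebar (insert e2 (Sp.erase top)))
    ∨ (Sp = {top} ∧
        (Sm = E ∪ {top, h1} ∨ Sm = E ∪ {top, ebar, e2} ∨ Sm = E ∪ {h1, ebar, e2})) := by
  set shift : ℤ := (if top ∈ Sp then 1 else 0)
    - ((if top ∈ Sm then 1 else 0) + (if h1 ∈ Sm then 1 else 0) + (if e2 ∈ Sm then 1 else 0))
  have hshift : ∀ x ∈ E, (if x ∈ Sp then (1 : ℤ) else 0) - (if x ∈ Sm then 1 else 0) = shift := by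
    intro x hx
    linarith [hcoord x hx]
  obtain ⟨x₀, hx₀⟩ := hE
  have hshift_cases : shift = 0 ∨ shift = 1 ∨ shift = -1 := by
    have := hshift x₀ hx₀
    split_ifs at this <;> omega
  rcases hshift_cases with h0 | hpos | hneg
  · have hagree : ∀ x ∈ E, x ∈ Sp ↔ x ∈ Sm := by
      intro x hx
      have := hshift x hx
      split_ifs at this <;> simp_all
    exact (eq_or_exchange_of_forall_mem_iff hSp hSm hpair hagree (by omega)).imp_right
      (Or.imp_right Or.inl)
  · have hE_out : ∀ x ∈ E, x ∉ Sm := by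
      intro x hx
      have := hshift x hx
      split_ifs at this <;> simp_all
    have hSm_out : top ∉ Sm ∧ h1 ∉ Sm ∧ e2 ∉ Sm := by
      simp only [shift] at hpos
      split_ifs at hpos <;> simp_all
    obtain ⟨y, hy⟩ := hSmne
    have hyU := hSm hy
    exfalso
    grind
  · have hdisjoint : ∀ x ∈ E, x ∉ Sp ∧ x ∈ Sm := by
      intro x hx
      have := hshift x hx
      split_ifs at this <;> simp_all
    exact Or.inr (Or.inr (Or.inr
      (eq_singleton_of_forall_not_mem_and_mem hSp hSm hSpne hpair hdisjoint (by omega))))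

end Classification

section Coordinates

variable {g : ℕ} {ε : ℤ} {u v : ℕ → (ℕ → ℤ) × (ℕ → ℤ)} {w : (ℕ → ℤ) × (ℕ → ℤ)}
  {O : Type*} [DecidableEq O] {e : ℕ → O} {ebar h1 e2 : O} {cl : O → (ℕ → ℤ) × (ℕ → ℤ)}

theorem fst_sum_cl_apply (hu : ∀ i, u i = (Pi.single i 1, 0)) (hv : ∀ i, v i = (0, Pi.single i 1))
    (hw : w = -∑ i ∈ Icc 1 g, u i) (he : Set.InjOn e (Set.Icc 1 (g+1)))
    (hd1 : ∀ i ∈ Icc 1 (g+1), e i ≠ ebar ∧ e i ≠ h1 ∧ e i ≠ e2)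
    (hd2 : ebar ≠ h1) (hd3 : ebar ≠ e2) (hd4 : h1 ≠ e2)
    (hcle : ∀ i ∈ Icc 1 g, cl (e i) = u i) (hcltop : cl (e (g+1)) = w) (hclh1 : cl h1 = w)
    (hclbar : cl ebar = ε • v 1) (hcle2 : cl e2 = w - ε • v 1)
    {j : ℕ} (hj : j ∈ Icc 1 g) {S : Finset O}
    (hS : S ⊆ insert ebar (insert h1 (insert e2 ((Icc 1 (g+1)).image e)))) :
    (∑ o ∈ S, cl o).1 j = (if e j ∈ S then 1 else 0) - (if e (g+1) ∈ S then 1 else 0)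
      - (if h1 ∈ S then 1 else 0) - (if e2 ∈ S then 1 else 0) := by
  have hw1 : w.1 j = -1 := by simp [hw, hu, Prod.fst_sum, Finset.sum_apply, Pi.single_apply, hj]
  have hj' := mem_Icc.mp hj
  have hdj := hd1 j (mem_Icc.mpr ⟨hj'.1, by omega⟩)
  have hdt := hd1 (g+1) (mem_Icc.mpr ⟨by omega, le_rfl⟩)
  have hjt : e j ≠ e (g+1) := fun h => absurd (he (by simp; omega) (by simp) h) (by omega)
  have horbit : ∀ o ∈ S, (cl o).1 j = (if o = e j then 1 else 0) - (if o = e (g+1) then 1 else 0)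
      - (if o = h1 then 1 else 0) - (if o = e2 then 1 else 0) := by
    intro o ho
    have ho := hS ho
    simp only [mem_insert, mem_image] at ho
    rcases ho with rfl | rfl | rfl | ⟨i, hi, rfl⟩
    · simp [hclbar, hv, hd2, hd3, hdj.1.symm, hdt.1.symm]
    · simp [hclh1, hw1, hd4, hdj.2.1.symm, hdt.2.1.symm]
    · simp [hcle2, hw1, hv, hdj.2.2.symm, hdt.2.2.symm, hd4.symm]
    · have hdi := hd1 i hi
      simp only [hdi.2.1, hdi.2.2, if_false, sub_zero]
      rcases eq_or_ne i (g+1) with rfl | hit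
      · simp [hcltop, hw1, hjt.symm]
      · have hi' : i ∈ Icc 1 g := by simp at hi ⊢; omega
        have hinj : e i = e j ↔ i = j := he.eq_iff (by simpa using hi) (by simp; omega)
        have hnt : e i ≠ e (g+1) := fun h => hit (he (by simpa using hi) (by simp) h)
        simp [hcle i hi', hu, Pi.single_apply, hinj, hnt, eq_comm]
  rw [Prod.fst_sum, Finset.sum_apply, sum_congr rfl horbit]
  simp [sum_sub_distrib]

theorem snd_sum_cl_apply_one_eq_zero_iff (hε : ε ≠ 0) (hu : ∀ i, u i = (Pi.single i 1, 0))
    (hv : ∀ i, v i = (0, Pi.single i 1)) (hw : w = -∑ i ∈ Icc 1 g, u i)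
    (hd1 : ∀ i ∈ Icc 1 (g+1), e i ≠ ebar ∧ e i ≠ h1 ∧ e i ≠ e2)
    (hd2 : ebar ≠ h1) (hd3 : ebar ≠ e2) (hd4 : h1 ≠ e2)
    (hcle : ∀ i ∈ Icc 1 g, cl (e i) = u i) (hcltop : cl (e (g+1)) = w) (hclh1 : cl h1 = w)
    (hclbar : cl ebar = ε • v 1) (hcle2 : cl e2 = w - ε • v 1) {S : Finset O}
    (hS : S ⊆ insert ebar (insert h1 (insert e2 ((Icc 1 (g+1)).image e)))) :
    (∑ o ∈ S, cl o).2 1 = 0 ↔ (ebar ∈ S ↔ e2 ∈ S) := by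
  have hw2 : w.2 = 0 := by simp [hw, hu, Prod.snd_sum]
  have horbit : ∀ o ∈ S,
      (cl o).2 1 = ε * ((if o = ebar then 1 else 0) - (if o = e2 then 1 else 0)) := by
    intro o ho
    have ho := hS ho
    simp only [mem_insert, mem_image] at ho
    rcases ho with rfl | rfl | rfl | ⟨i, hi, rfl⟩
    · simp [hclbar, hv, hd3]
    · simp [hclh1, hw2, hd2.symm, hd4]
    · simp [hcle2, hw2, hv, hd3.symm]
    · have hdi := hd1 i hi
      rcases eq_or_ne i (g+1) with rfl | hit
      · simp [hcltop, hw2, hdi.1, hdi.2.2]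
      · have hi' : i ∈ Icc 1 g := by simp at hi ⊢; omega
        simp [hcle i hi', hu, hdi.1, hdi.2.2]
  rw [Prod.snd_sum, Finset.sum_apply, sum_congr rfl horbit, ← mul_sum]
  by_cases hbar : ebar ∈ S <;> by_cases he2 : e2 ∈ S <;> simp [sum_sub_distrib, hbar, he2, hε]

end Coordinates

/-- the complete homological classification in the handle
`N¹_1` (ε = +1) or `(N²_1)'` (ε = −1): the Reeb orbits are formal symbols
`e 1, …, e g, e (g+1), ebar, h1, e2` with the indicated classes, and any
nonempty `S⁺ ⊆ {e 1, …, e (g+1)}`, `S⁻ ⊆ O` with equal total class fall into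
one of four cases. -/
theorem splitting_homological_classification (g : ℕ) (hg : 1 ≤ g)
    (ε : ℤ) (hε : ε = 1 ∨ ε = -1)
    (u v : ℕ → (ℕ → ℤ) × (ℕ → ℤ))
    (hu : ∀ i, u i = (Pi.single i 1, 0))
    (hv : ∀ i, v i = (0, Pi.single i 1))
    (w : (ℕ → ℤ) × (ℕ → ℤ))
    (hw : w = -∑ i ∈ Icc 1 g, u i)
    (O : Type) [DecidableEq O]
    (e : ℕ → O) (ebar h1 e2 : O)
    (he : Set.InjOn e (Set.Icc 1 (g+1)))
    (hd1 : ∀ i ∈ Icc 1 (g+1), e i ≠ ebar ∧ e i ≠ h1 ∧ e i ≠ e2)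
    (hd2 : ebar ≠ h1) (hd3 : ebar ≠ e2) (hd4 : h1 ≠ e2)
    (cl : O → (ℕ → ℤ) × (ℕ → ℤ))
    (hcle : ∀ i ∈ Icc 1 g, cl (e i) = u i)
    (hcltop : cl (e (g+1)) = w)
    (hclh1 : cl h1 = w)
    (hclbar : cl ebar = ε • v 1)
    (hcle2 : cl e2 = w - ε • v 1)
    (Sp Sm : Finset O)
    (hSp : Sp ⊆ (Icc 1 (g+1)).image e)
    (hSm : Sm ⊆ insert ebar (insert h1 (insert e2 ((Icc 1 (g+1)).image e))))
    (hSpne : Sp.Nonempty) (hSmne : Sm.Nonempty)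
    (hcl : ∑ o ∈ Sp, cl o = ∑ o ∈ Sm, cl o) :
    Sm = Sp
    ∨ (e (g+1) ∈ Sp ∧ Sm = insert h1 (Sp.erase (e (g+1))))
    ∨ (e (g+1) ∈ Sp ∧ Sm = insert ebar (insert e2 (Sp.erase (e (g+1)))))
    ∨ (Sp = {e (g+1)} ∧
        (Sm = (Icc 1 g).image e ∪ {e (g+1), h1}
         ∨ Sm = (Icc 1 g).image e ∪ {e (g+1), ebar, e2}
         ∨ Sm = (Icc 1 g).image e ∪ {h1, ebar, e2})) := by
  have hSpU : Sp ⊆ insert ebar (insert h1 (insert e2 ((Icc 1 (g+1)).image e))) :=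
    hSp.trans <| (subset_insert _ _).trans <| (subset_insert _ _).trans (subset_insert _ _)
  have hSp_out : ∀ o ∈ Sp, o ≠ ebar ∧ o ≠ h1 ∧ o ≠ e2 := fun o ho => by
    obtain ⟨i, hi, rfl⟩ := mem_image.mp (hSp ho)
    exact hd1 i hi
  have hpair : ebar ∈ Sm ↔ e2 ∈ Sm := by
    have hzero {S : Finset O} := snd_sum_cl_apply_one_eq_zero_iff (S := S) (by omega) hu hv hw
      hd1 hd2 hd3 hd4 hcle hcltop hclh1 hclbar hcle2
    rw [← hzero hSm, ← hcl, hzero hSpU]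
    exact iff_of_false (fun h => (hSp_out _ h).1 rfl) (fun h => (hSp_out _ h).2.2 rfl)
  have hIcc : (Icc 1 (g+1)).image e = insert (e (g+1)) ((Icc 1 g).image e) := by
    rw [← insert_Icc_right_eq_Icc_add_one (by omega), image_insert]
  refine classification_of_coordinates ((nonempty_Icc.mpr hg).image e) (hIcc ▸ hSp)
    (hIcc ▸ hSm) hSpne hSmne hpair ?_
  rw [forall_mem_image]
  intro j hj
  have hfst {S : Finset O} := fst_sum_cl_apply (S := S) hu hv hw he hd1 hd2 hd3 hd4 hcle hcltop
    hclh1 hclbar hcle2 hj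
  have hSp_coord := hfst hSpU
  rw [hcl, hfst hSm] at hSp_coord
  have hh1 : h1 ∉ Sp := fun h => (hSp_out h1 h).2.1 rfl
  have he2 : e2 ∉ Sp := fun h => (hSp_out e2 h).2.2 rfl
  simpa [hh1, he2] using hSp_coord.symm
end

section
/- Let g ≥ 1 and fix a sign ε ∈ {+1, −1}. Let O consist of pairwise distinct symbols e_1, …, e_g, e_{g+1}, ē_1, h¹, e² with class map cl(e_i) = u_i for 1 ≤ i ≤ g, cl(e_{g+1}) = cl(h¹) = w, cl(ē_1) = ε·v_1, and cl(e²) = w − ε·v_1, and let A : O → ℝ_{>0} be an action map satisfying A(e_1) = ⋯ = A(e_g) = A(e_{g+1}) = a, A(h¹) < a, and a < A(ē_1), a < A(e²). Suppose S⁺ ⊆ {e_1, …, e_{g+1}} and S⁻ ⊆ {e_1, …, e_{g+1}, ē_1, h¹, e²} are both nonempty, cl(S⁺) = cl(S⁻), and A(S⁻) < A(S⁺). Then e_{g+1} ∈ S⁺ and S⁻ = (S⁺ ∖ {e_{g+1}}) ∪ {h¹}. -/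
/-!
Compare `S⁻` with `S⁺` through the signed multiplicity `δ = 𝟙_{S⁺} - 𝟙_{S⁻}`. The
`v₁`-coordinate of the class equation forces `ē₁` and `e²` to lie in `S⁻` together, and the
`uⱼ`-coordinates force `δ(eⱼ) = δ(e_{g+1}) + δ(h¹) + δ(e²)` for every `j ≤ g`. Substituted into
the action inequality, this shows that a pair `ē₁, e²` would cost more than `2a` while the
`e`-orbits gain at most `a`, so `ē₁, e² ∉ S⁻` and `δ(e_{g+1}) = 1`. If `h¹ ∈ S⁻`, then `δ`
vanishes on `e₁, …, e_g`, which is the claim; otherwise `S⁻ = ∅`.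
-/

open Finset

section SignedCount

variable {α : Type*} [DecidableEq α]

def signedCount (T S : Finset α) (o : α) : ℤ :=
  (if o ∈ T then 1 else 0) - (if o ∈ S then 1 else 0)

variable {T S : Finset α} {o : α}

lemma signedCount_le_one : signedCount T S o ≤ 1 := by
  unfold signedCount; split_ifs <;> norm_num

lemma signedCount_eq_one_iff : signedCount T S o = 1 ↔ o ∈ T ∧ o ∉ S := by
  unfold signedCount; split_ifs <;> simp_all

lemma signedCount_eq_zero_iff : signedCount T S o = 0 ↔ (o ∈ T ↔ o ∈ S) := by
  unfold signedCount; split_ifs <;> simp_all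

lemma signedCount_eq_neg_one_iff : signedCount T S o = -1 ↔ o ∉ T ∧ o ∈ S := by
  unfold signedCount; split_ifs <;> simp_all

lemma notMem_of_signedCount_eq_zero (hT : o ∉ T) (h : signedCount T S o = 0) : o ∉ S :=
  fun hS => hT ((signedCount_eq_zero_iff.1 h).2 hS)

lemma signedCount_nonpos_of_notMem (hT : o ∉ T) : signedCount T S o ≤ 0 := by
  unfold signedCount; split_ifs <;> simp_all

lemma signedCount_eq_zero_or_eq_neg_one (hT : o ∉ T) :
    signedCount T S o = 0 ∨ signedCount T S o = -1 := by
  unfold signedCount; split_ifs <;> simp_all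

lemma sum_sub_sum_eq_sum_signedCount_smul {M : Type*} [AddCommGroup M] {U : Finset α}
    (hT : T ⊆ U) (hS : S ⊆ U) (f : α → M) :
    ∑ o ∈ T, f o - ∑ o ∈ S, f o = ∑ o ∈ U, signedCount T S o • f o := by
  simp only [signedCount, sub_smul, ite_smul, one_smul, zero_smul, sum_sub_distrib, sum_ite_mem,
    inter_eq_right.mpr hT, inter_eq_right.mpr hS]

end SignedCount

lemma Finset.eq_of_forall_mem_iff_of_subset {α : Type*} {S T U : Finset α} (hS : S ⊆ U)
    (hT : T ⊆ U) (h : ∀ o ∈ U, o ∈ S ↔ o ∈ T) : S = T :=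
  ext fun o => ⟨fun ho => (h o (hS ho)).1 ho, fun ho => (h o (hT ho)).2 ho⟩

lemma Finset.notMem_of_subset_image {α β : Type*} [DecidableEq β] {f : α → β} {s : Finset α}
    {S : Finset β} {b : β} (hS : S ⊆ s.image f) (hb : ∀ a ∈ s, f a ≠ b) : b ∉ S := fun h => by
  obtain ⟨a, ha, rfl⟩ := mem_image.1 (hS h)
  exact hb a ha rfl

lemma coeffs_of_class_relation (g : ℕ) (ε : ℤ) (hε : ε ≠ 0)
    (u v : ℕ → (ℕ → ℤ) × (ℕ → ℤ))
    (hu : ∀ i, u i = (Pi.single i 1, 0))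
    (hv : ∀ i, v i = (0, Pi.single i 1))
    (w : (ℕ → ℤ) × (ℕ → ℤ))
    (hw : w = -∑ i ∈ Icc 1 g, u i)
    (x : ℕ → ℤ) (xbar xh xe2 xtop : ℤ)
    (h : xbar • (ε • v 1) + xh • w + xe2 • (w - ε • v 1) +
      (∑ i ∈ Icc 1 g, x i • u i + xtop • w) = 0) :
    xbar = xe2 ∧ ∀ j ∈ Icc 1 g, x j = xtop + xh + xe2 := by
  subst hw
  simp only [hu, hv] at h
  refine ⟨?_, fun j hj => ?_⟩
  · simpa [Prod.snd_sum, hε, add_neg_eq_zero] using congrArg (fun p => p.2 1) h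
  · have hj_coord := congrArg (fun p => p.1 j) h
    simp only [Prod.fst_add, Prod.fst_sub, Prod.smul_fst, Prod.fst_neg, Prod.fst_sum, Pi.add_apply,
      Pi.sub_apply, Pi.smul_apply, Pi.neg_apply, Finset.sum_apply, Pi.single_apply, Pi.zero_apply,
      Prod.fst_zero, smul_zero, smul_eq_mul, mul_ite, mul_zero, mul_one, Finset.sum_ite_eq,
      if_pos hj] at hj_coord
    linarith

lemma signs_of_action_pos (g : ℕ) (a Abar Ah Ae2 : ℝ) (ha : 0 < a) (hAh : 0 < Ah)
    (hAbar : a < Abar) (hAe2 : a < Ae2) (x : ℕ → ℤ) (xbar xh xe2 xtop : ℤ)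
    (hxtop : xtop ≤ 1) (hxh : xh ≤ 0) (hxe2 : xe2 = 0 ∨ xe2 = -1) (hxbar : xbar = xe2)
    (hx : ∀ j ∈ Icc 1 g, x j = xtop + xh + xe2)
    (h : 0 < xbar • Abar + xh • Ah + xe2 • Ae2 + (∑ i ∈ Icc 1 g, x i • a + xtop • a)) :
    xtop = 1 ∧ xe2 = 0 := by
  rw [sum_congr rfl fun j hj => by rw [hx j hj], sum_const, Nat.card_Icc, hxbar] at h
  simp only [zsmul_eq_mul, nsmul_eq_mul, Nat.add_sub_cancel, Int.cast_add] at h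
  have hga : (0 : ℝ) ≤ g * a := mul_nonneg g.cast_nonneg ha.le
  have hxh' : (xh : ℝ) ≤ 0 := by exact_mod_cast hxh
  have hxhA : (xh : ℝ) * Ah ≤ 0 := mul_nonpos_of_nonpos_of_nonneg hxh' hAh.le
  have hxhga : (xh : ℝ) * (g * a) ≤ 0 := mul_nonpos_of_nonpos_of_nonneg hxh' hga
  obtain rfl | rfl := hxe2
  · refine ⟨le_antisymm hxtop ?_, rfl⟩
    by_contra! hneg
    have hxtop' : (xtop : ℝ) ≤ 0 := by exact_mod_cast Int.lt_add_one_iff.mp hneg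
    push_cast at h
    linarith [mul_nonpos_of_nonpos_of_nonneg hxtop' hga,
      mul_nonpos_of_nonpos_of_nonneg hxtop' ha.le]
  · have hxtop' : (xtop : ℝ) ≤ 1 := by exact_mod_cast hxtop
    push_cast at h
    linarith [mul_le_mul_of_nonneg_right hxtop' hga, mul_le_mul_of_nonneg_right hxtop' ha.le]

section Orbits

variable {O : Type*} [DecidableEq O] {g : ℕ} {e : ℕ → O} {ebar h1 e2 : O}

lemma forall_mem_orbits (p : O → Prop) :
    (∀ o ∈ insert ebar (insert h1 (insert e2 ((Icc 1 (g+1)).image e))), p o) ↔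
      p ebar ∧ p h1 ∧ p e2 ∧ (∀ i ∈ Icc 1 g, p (e i)) ∧ p (e (g+1)) := by
  rw [← insert_Icc_right_eq_Icc_add_one (by omega)]
  simp only [forall_mem_insert, forall_mem_image]
  tauto

lemma sum_orbits {M : Type*} [AddCommMonoid M]
    (he : Set.InjOn e (Set.Icc 1 (g+1)))
    (hd1 : ∀ i ∈ Icc 1 (g+1), e i ≠ ebar ∧ e i ≠ h1 ∧ e i ≠ e2)
    (hd2 : ebar ≠ h1) (hd3 : ebar ≠ e2) (hd4 : h1 ≠ e2) (F : O → M) :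
    ∑ o ∈ insert ebar (insert h1 (insert e2 ((Icc 1 (g+1)).image e))), F o =
      F ebar + F h1 + F e2 + (∑ i ∈ Icc 1 g, F (e i) + F (e (g+1))) := by
  rw [sum_insert, sum_insert, sum_insert, sum_image (by simpa using he),
    sum_Icc_succ_top (by omega), add_assoc, add_assoc]
  all_goals simp only [mem_insert, mem_image, not_or, not_exists, not_and]
  · exact fun i hi => (hd1 i hi).2.2
  · exact ⟨hd4, fun i hi => (hd1 i hi).2.1⟩
  · exact ⟨hd2, hd3, fun i hi => (hd1 i hi).1⟩

lemma eq_insert_erase_of_signedCount (he : Set.InjOn e (Set.Icc 1 (g+1)))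
    (hd1 : ∀ i ∈ Icc 1 (g+1), e i ≠ ebar ∧ e i ≠ h1 ∧ e i ≠ e2) (hd2 : ebar ≠ h1) (hd4 : h1 ≠ e2)
    {Sp Sm : Finset O} (hSp : Sp ⊆ (Icc 1 (g+1)).image e)
    (hSm : Sm ⊆ insert ebar (insert h1 (insert e2 ((Icc 1 (g+1)).image e))))
    (hSmne : Sm.Nonempty)
    (htop : signedCount Sp Sm (e (g+1)) = 1) (hbar : signedCount Sp Sm ebar = 0)
    (he2 : signedCount Sp Sm e2 = 0)
    (hj : ∀ j ∈ Icc 1 g, signedCount Sp Sm (e j) =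
      signedCount Sp Sm (e (g+1)) + signedCount Sp Sm h1 + signedCount Sp Sm e2) :
    e (g+1) ∈ Sp ∧ Sm = insert h1 (Sp.erase (e (g+1))) := by
  have hIcc : ∀ i ∈ Icc 1 g, i ∈ Icc 1 (g+1) := fun i hi => Icc_subset_Icc_right (by omega) hi
  have htopIcc : g + 1 ∈ Icc 1 (g+1) := right_mem_Icc.2 (by omega)
  have hbarSp : ebar ∉ Sp := notMem_of_subset_image hSp fun i hi => (hd1 i hi).1
  have hh1Sp : h1 ∉ Sp := notMem_of_subset_image hSp fun i hi => (hd1 i hi).2.1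
  have he2Sp : e2 ∉ Sp := notMem_of_subset_image hSp fun i hi => (hd1 i hi).2.2
  obtain ⟨htopSp, htopSm⟩ := signedCount_eq_one_iff.1 htop
  have hbarSm : ebar ∉ Sm := notMem_of_signedCount_eq_zero hbarSp hbar
  have he2Sm : e2 ∉ Sm := notMem_of_signedCount_eq_zero he2Sp he2
  rcases signedCount_eq_zero_or_eq_neg_one hh1Sp with hh1 | hh1
  · have hnone : ∀ o ∈ insert ebar (insert h1 (insert e2 ((Icc 1 (g+1)).image e))), o ∉ Sm :=
      (forall_mem_orbits _).2 ⟨hbarSm, notMem_of_signedCount_eq_zero hh1Sp hh1, he2Sm,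
        fun j hj' => (signedCount_eq_one_iff.1 (by rw [hj j hj', htop, hh1, he2]; rfl)).2, htopSm⟩
    obtain ⟨o, ho⟩ := hSmne
    exact absurd ho (hnone o (hSm ho))
  · have hh1Sm := (signedCount_eq_neg_one_iff.1 hh1).2
    have hSpU : Sp ⊆ insert ebar (insert h1 (insert e2 ((Icc 1 (g+1)).image e))) :=
      fun o ho => mem_insert_of_mem <| mem_insert_of_mem <| mem_insert_of_mem (hSp ho)
    refine ⟨htopSp, eq_of_forall_mem_iff_of_subset hSm
      (insert_subset (by simp) ((erase_subset _ _).trans hSpU))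
      ((forall_mem_orbits _).2 ⟨?_, ?_, ?_, fun j hj' => ?_, ?_⟩)⟩
    · simp [hbarSm, hbarSp, hd2]
    · simp [hh1Sm]
    · simp [he2Sm, he2Sp, hd4.symm]
    · have hjSp := signedCount_eq_zero_iff.1 (by rw [hj j hj', htop, hh1, he2]; rfl)
      have hjtop : e j ≠ e (g+1) :=
        he.ne (by simpa using hIcc j hj') (by simp) (by simp at hj'; omega)
      simp [(hd1 j (hIcc j hj')).2.1, hjtop, hjSp]
    · simp [htopSm, (hd1 (g+1) htopIcc).2.1]

end Orbits

theorem splitting_action_forces_hyperbolic_general (g : ℕ)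
    (ε : ℤ) (hε : ε = 1 ∨ ε = -1)
    (u v : ℕ → (ℕ → ℤ) × (ℕ → ℤ))
    (hu : ∀ i, u i = (Pi.single i 1, 0))
    (hv : ∀ i, v i = (0, Pi.single i 1))
    (w : (ℕ → ℤ) × (ℕ → ℤ))
    (hw : w = -∑ i ∈ Icc 1 g, u i)
    (O : Type) [DecidableEq O]
    (e : ℕ → O) (ebar h1 e2 : O)
    (he : Set.InjOn e (Set.Icc 1 (g+1)))
    (hd1 : ∀ i ∈ Icc 1 (g+1), e i ≠ ebar ∧ e i ≠ h1 ∧ e i ≠ e2)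
    (hd2 : ebar ≠ h1) (hd3 : ebar ≠ e2) (hd4 : h1 ≠ e2)
    (cl : O → (ℕ → ℤ) × (ℕ → ℤ))
    (hcle : ∀ i ∈ Icc 1 g, cl (e i) = u i)
    (hcltop : cl (e (g+1)) = w)
    (hclh1 : cl h1 = w)
    (hclbar : cl ebar = ε • v 1)
    (hcle2 : cl e2 = w - ε • v 1)
    (A : O → ℝ) (hApos : ∀ o, 0 < A o) (a : ℝ)
    (hAe : ∀ i ∈ Icc 1 (g+1), A (e i) = a)
    (hAbar : a < A ebar) (hAe2 : a < A e2)
    (Sp Sm : Finset O)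
    (hSp : Sp ⊆ (Icc 1 (g+1)).image e)
    (hSm : Sm ⊆ insert ebar (insert h1 (insert e2 ((Icc 1 (g+1)).image e))))
    (hSmne : Sm.Nonempty)
    (hcl : ∑ o ∈ Sp, cl o = ∑ o ∈ Sm, cl o)
    (hA : ∑ o ∈ Sm, A o < ∑ o ∈ Sp, A o) :
    e (g+1) ∈ Sp ∧ Sm = insert h1 (Sp.erase (e (g+1))) := by
  have htopIcc : g + 1 ∈ Icc 1 (g+1) := right_mem_Icc.2 (by omega)
  have hSpU : Sp ⊆ insert ebar (insert h1 (insert e2 ((Icc 1 (g+1)).image e))) :=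
    fun o ho => mem_insert_of_mem <| mem_insert_of_mem <| mem_insert_of_mem (hSp ho)
  have hclass := sum_sub_sum_eq_sum_signedCount_smul hSpU hSm cl
  rw [hcl, sub_self, sum_orbits he hd1 hd2 hd3 hd4, hclbar, hclh1, hcle2, hcltop,
    sum_congr rfl fun i hi => by rw [hcle i hi]] at hclass
  obtain ⟨hbar, hj⟩ := coeffs_of_class_relation g ε (by rcases hε with rfl | rfl <;> norm_num)
    u v hu hv w hw (signedCount Sp Sm ∘ e) _ _ _ _ hclass.symm
  have haction := sub_pos.2 hA
  rw [sum_sub_sum_eq_sum_signedCount_smul hSpU hSm, sum_orbits he hd1 hd2 hd3 hd4,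
    hAe (g+1) htopIcc, sum_congr rfl fun i (hi : i ∈ Icc 1 g) => by
      rw [hAe i (Icc_subset_Icc_right (by omega) hi)]] at haction
  obtain ⟨htop, he2⟩ := signs_of_action_pos g a _ _ _ (hAe _ htopIcc ▸ hApos _) (hApos h1)
    hAbar hAe2 _ _ _ _ _ signedCount_le_one
    (signedCount_nonpos_of_notMem <| notMem_of_subset_image hSp fun i hi => (hd1 i hi).2.1)
    (signedCount_eq_zero_or_eq_neg_one <| notMem_of_subset_image hSp fun i hi => (hd1 i hi).2.2)
    hbar hj haction
  exact eq_insert_erase_of_signedCount he hd1 hd2 hd4 hSp hSm hSmne htop (hbar.trans he2) he2 hj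

/-- the combinatorial core of Lemma 3.5: with the action
constraints, the only possibility is that `e (g+1)` is replaced by the
hyperbolic orbit `h1` of smaller action. -/
theorem splitting_action_forces_hyperbolic (g : ℕ) (hg : 1 ≤ g)
    (ε : ℤ) (hε : ε = 1 ∨ ε = -1)
    (u v : ℕ → (ℕ → ℤ) × (ℕ → ℤ))
    (hu : ∀ i, u i = (Pi.single i 1, 0))
    (hv : ∀ i, v i = (0, Pi.single i 1))
    (w : (ℕ → ℤ) × (ℕ → ℤ))
    (hw : w = -∑ i ∈ Icc 1 g, u i)
    (O : Type) [DecidableEq O]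
    (e : ℕ → O) (ebar h1 e2 : O)
    (he : Set.InjOn e (Set.Icc 1 (g+1)))
    (hd1 : ∀ i ∈ Icc 1 (g+1), e i ≠ ebar ∧ e i ≠ h1 ∧ e i ≠ e2)
    (hd2 : ebar ≠ h1) (hd3 : ebar ≠ e2) (hd4 : h1 ≠ e2)
    (cl : O → (ℕ → ℤ) × (ℕ → ℤ))
    (hcle : ∀ i ∈ Icc 1 g, cl (e i) = u i)
    (hcltop : cl (e (g+1)) = w)
    (hclh1 : cl h1 = w)
    (hclbar : cl ebar = ε • v 1)
    (hcle2 : cl e2 = w - ε • v 1)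
    (A : O → ℝ) (hApos : ∀ o, 0 < A o) (a : ℝ)
    (hAe : ∀ i ∈ Icc 1 (g+1), A (e i) = a)
    (hAh1 : A h1 < a) (hAbar : a < A ebar) (hAe2 : a < A e2)
    (Sp Sm : Finset O)
    (hSp : Sp ⊆ (Icc 1 (g+1)).image e)
    (hSm : Sm ⊆ insert ebar (insert h1 (insert e2 ((Icc 1 (g+1)).image e))))
    (hSpne : Sp.Nonempty) (hSmne : Sm.Nonempty)
    (hcl : ∑ o ∈ Sp, cl o = ∑ o ∈ Sm, cl o)
    (hA : ∑ o ∈ Sm, A o < ∑ o ∈ Sp, A o) :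
    e (g+1) ∈ Sp ∧ Sm = insert h1 (Sp.erase (e (g+1))) :=
  splitting_action_forces_hyperbolic_general g ε hε u v hu hv w hw O e ebar h1 e2 he hd1 hd2 hd3 hd4
    cl hcle hcltop hclh1 hclbar hcle2 A hApos a hAe hAbar hAe2 Sp Sm hSp hSm hSmne hcl hA
end

section
/- Let g ≥ 1 and fix a sign ε ∈ {+1, −1}. Let O consist of pairwise distinct symbols e_1, …, e_g, e_{g+1}, ē_1, h¹, e² with class map cl(e_i) = u_i for 1 ≤ i ≤ g, cl(e_{g+1}) = cl(h¹) = w, cl(ē_1) = ε·v_1, and cl(e²) = w − ε·v_1, and let A : O → ℝ_{>0} be an action map satisfying A(e_1) = ⋯ = A(e_g) = A(e_{g+1}) = a, A(h¹) < a, and a < A(ē_1), a < A(e²). Suppose S⁺ ⊆ {e_1, …, e_g, h¹} is nonempty, S⁻ ⊆ {e_1, …, e_{g+1}, ē_1, h¹, e²}, cl(S⁺) = cl(S⁻), and A(S⁻) < A(S⁺). Then S⁻ = ∅ and S⁺ = {e_1, …, e_g, h¹}. -/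
/-!
Evaluate the classes on the coordinate functional dual to `u_j`: it is `δ_ij` on `e_i`, `-1` on
each of `h¹, e², e_{g+1}` (whose classes have `u`-part `w`) and `0` on `ē_1`. If `p` and `k` count
the ends among `h¹, e², e_{g+1}` in `S⁺` and `S⁻`, equality of classes thus says
`[e_j ∈ S⁻] - [e_j ∈ S⁺] = k - p` for every `j`. Each of these ends has action at least `A(h¹)`, so
`k ≥ p` would make every positive `e_j` a negative end as well and give `A(S⁻) ≥ A(S⁺)`. Hence
`p = 1` and `k = 0`: all `e_j` are positive and none is negative, so `S⁺ = {e_1, …, e_g, h¹}`,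
whose total class `w + Σ u_i` vanishes, and `S⁻ ⊆ {ē_1}`; since `cl(ē_1) = ±v_1 ≠ 0`, `S⁻ = ∅`.
-/

open Finset

section Counting

variable {O : Type*} [DecidableEq O]

theorem sum_ite_eq_sub_ite_mem (S W : Finset O) (x : O) :
    ∑ o ∈ S, ((if o = x then 1 else 0) - (if o ∈ W then 1 else 0) : ℤ) =
      (if x ∈ S then 1 else 0) - #(S ∩ W) := by
  rw [sum_sub_distrib, sum_ite_eq', sum_boole, filter_mem_eq_inter]

theorem sum_ite_mem_add_ite_mem {R : Type*} [Semiring R] (S E W : Finset O) (a b : R) :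
    ∑ o ∈ S, ((if o ∈ E then a else 0) + (if o ∈ W then b else 0)) =
      #(S ∩ E) * a + #(S ∩ W) * b := by
  rw [sum_add_distrib, sum_ite_mem, sum_ite_mem, sum_const, sum_const, nsmul_eq_mul,
    nsmul_eq_mul]

variable {E W Sp Sm : Finset O}

theorem inter_subset_of_counts_eq
    (hcount : ∀ x ∈ E, (if x ∈ Sp then 1 else 0 : ℤ) - #(Sp ∩ W) =
      (if x ∈ Sm then 1 else 0) - #(Sm ∩ W))
    (hle : #(Sp ∩ W) ≤ #(Sm ∩ W)) : Sp ∩ E ⊆ Sm := by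
  intro x hx
  obtain ⟨hxSp, hxE⟩ := mem_inter.1 hx
  have h := hcount x hxE
  rw [if_pos hxSp] at h
  split_ifs at h with hxSm
  · exact hxSm
  · omega

theorem disjoint_and_subset_of_counts_eq_of_lt {a b : ℝ} (ha : 0 ≤ a) (hb : 0 ≤ b)
    (hSpW : #(Sp ∩ W) ≤ 1)
    (hcount : ∀ x ∈ E, (if x ∈ Sp then 1 else 0 : ℤ) - #(Sp ∩ W) =
      (if x ∈ Sm then 1 else 0) - #(Sm ∩ W))
    (hweight : #(Sm ∩ E) * a + #(Sm ∩ W) * b < #(Sp ∩ E) * a + #(Sp ∩ W) * b) :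
    Disjoint Sm (W ∪ E) ∧ E ⊆ Sp ∧ #(Sp ∩ W) = 1 := by
  have hlt : #(Sm ∩ W) < #(Sp ∩ W) := by
    by_contra! hle
    have hE : #(Sp ∩ E) ≤ #(Sm ∩ E) :=
      card_le_card (subset_inter (inter_subset_of_counts_eq hcount hle) inter_subset_right)
    refine hweight.not_ge ?_
    gcongr
  have hSm : #(Sm ∩ W) = 0 := by omega
  have hSp : #(Sp ∩ W) = 1 := by omega
  have hE : ∀ x ∈ E, x ∈ Sp ∧ x ∉ Sm := by
    intro x hx
    have h := hcount x hx
    rw [hSm, hSp] at h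
    split_ifs at h with h₁ h₂ <;> first | exact ⟨h₁, h₂⟩ | omega
  exact ⟨disjoint_union_right.2 ⟨disjoint_iff_inter_eq_empty.2 (card_eq_zero.1 hSm),
    disjoint_right.2 fun x hx => (hE x hx).2⟩, fun x hx => (hE x hx).1, hSp⟩

end Counting

section Configuration

-- `E`, `W`, `b` and `h` play the roles of `{e_1, …, e_g}`, `{h¹, e², e_{g+1}}`, `ē_1` and `h¹`.

variable {O L : Type*} [DecidableEq O] [AddCommGroup L] {E W S : Finset O} {b h : O}

theorem apply_sum_eq_ite_sub_card_inter {cl : O → L} {x : O} {χ : L →+ ℤ}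
    (hS : S ⊆ insert b (W ∪ E)) (hWE : Disjoint W E) (hbW : b ∉ W) (hbE : b ∉ E) (hx : x ∈ E)
    (hχb : χ (cl b) = 0) (hχW : ∀ o ∈ W, χ (cl o) = -1)
    (hχE : ∀ o ∈ E, χ (cl o) = if o = x then 1 else 0) :
    χ (∑ o ∈ S, cl o) = (if x ∈ S then 1 else 0) - #(S ∩ W) := by
  rw [map_sum, ← sum_ite_eq_sub_ite_mem]
  refine sum_congr rfl fun o ho => ?_
  rcases mem_insert.1 (hS ho) with rfl | ho
  · rw [hχb, if_neg (ne_of_mem_of_not_mem hx hbE).symm, if_neg hbW, sub_zero]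
  rcases mem_union.1 ho with hoW | hoE
  · rw [hχW o hoW, if_neg (ne_of_mem_of_not_mem hoW (disjoint_right.1 hWE hx)), if_pos hoW,
      zero_sub]
  · rw [hχE o hoE, if_neg (disjoint_right.1 hWE hoE), sub_zero]

theorem card_inter_mul_add_le_sum {A : O → ℝ} {a : ℝ} (hS : S ⊆ insert b (W ∪ E))
    (hWE : Disjoint W E) (hbW : b ∉ W) (hbE : b ∉ E) (hAb : 0 ≤ A b) (hAW : ∀ o ∈ W, A h ≤ A o)
    (hAE : ∀ o ∈ E, A o = a) :
    #(S ∩ E) * a + #(S ∩ W) * A h ≤ ∑ o ∈ S, A o := by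
  rw [← sum_ite_mem_add_ite_mem]
  refine sum_le_sum fun o ho => ?_
  rcases mem_insert.1 (hS ho) with rfl | ho
  · simpa [hbW, hbE] using hAb
  rcases mem_union.1 ho with hoW | hoE
  · simpa [disjoint_left.1 hWE hoW, hoW] using hAW o hoW
  · simp [hoE, disjoint_right.1 hWE hoE, hAE o hoE]

theorem sum_eq_card_inter_mul_add {A : O → ℝ} {a : ℝ} (hS : S ⊆ insert h E)
    (hWE : Disjoint W E) (hhW : h ∈ W) (hAE : ∀ o ∈ E, A o = a) :
    ∑ o ∈ S, A o = #(S ∩ E) * a + #(S ∩ W) * A h := by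
  rw [← sum_ite_mem_add_ite_mem]
  refine sum_congr rfl fun o ho => ?_
  rcases mem_insert.1 (hS ho) with rfl | hoE
  · simp [disjoint_left.1 hWE hhW, hhW]
  · simp [hoE, disjoint_right.1 hWE hoE, hAE o hoE]

theorem eq_empty_and_eq_insert_of_sum_eq_of_sum_lt {Sp Sm : Finset O} {cl : O → L}
    {A : O → ℝ} {a : ℝ} (hWE : Disjoint W E) (hbW : b ∉ W) (hbE : b ∉ E) (hhW : h ∈ W)
    (hSp : Sp ⊆ insert h E) (hSm : Sm ⊆ insert b (W ∪ E))
    (hχ : ∀ x ∈ E, ∃ χ : L →+ ℤ, χ (cl b) = 0 ∧ (∀ o ∈ W, χ (cl o) = -1) ∧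
      ∀ o ∈ E, χ (cl o) = if o = x then 1 else 0)
    (hclb : cl b ≠ 0) (hclhE : cl h + ∑ o ∈ E, cl o = 0)
    (ha : 0 ≤ a) (hAb : 0 ≤ A b) (hAh : 0 ≤ A h) (hAW : ∀ o ∈ W, A h ≤ A o)
    (hAE : ∀ o ∈ E, A o = a)
    (hcl : ∑ o ∈ Sp, cl o = ∑ o ∈ Sm, cl o) (hA : ∑ o ∈ Sm, A o < ∑ o ∈ Sp, A o) :
    Sm = ∅ ∧ Sp = insert h E := by
  have hhE : h ∉ E := disjoint_left.1 hWE hhW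
  have hSp' : Sp ⊆ insert b (W ∪ E) :=
    hSp.trans <| insert_subset (by simp [hhW]) (subset_union_right.trans (subset_insert _ _))
  have hcount : ∀ x ∈ E, (if x ∈ Sp then 1 else 0 : ℤ) - #(Sp ∩ W) =
      (if x ∈ Sm then 1 else 0) - #(Sm ∩ W) := by
    intro x hx
    obtain ⟨χ, hχb, hχW, hχE⟩ := hχ x hx
    have h := congrArg χ hcl
    rwa [apply_sum_eq_ite_sub_card_inter hSp' hWE hbW hbE hx hχb hχW hχE,
      apply_sum_eq_ite_sub_card_inter hSm hWE hbW hbE hx hχb hχW hχE] at h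
  have hSpW : Sp ∩ W ⊆ {h} := fun o ho => by
    rcases mem_insert.1 (hSp (mem_inter.1 ho).1) with rfl | hoE
    · exact mem_singleton_self o
    · exact absurd hoE (disjoint_left.1 hWE (mem_inter.1 ho).2)
  obtain ⟨hSmWE, hESp, hSpW1⟩ := disjoint_and_subset_of_counts_eq_of_lt ha hAh
    ((card_le_card hSpW).trans (card_singleton h).le) hcount
    ((card_inter_mul_add_le_sum hSm hWE hbW hbE hAb hAW hAE).trans_lt
      (hA.trans_eq (sum_eq_card_inter_mul_add hSp hWE hhW hAE)))
  have hSp_eq : Sp = insert h E := by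
    have : Sp ∩ W = {h} := eq_of_subset_of_card_le hSpW (by rw [hSpW1, card_singleton])
    exact hSp.antisymm (insert_subset (mem_inter.1 (this ▸ mem_singleton_self h)).1 hESp)
  have hSm_b : Sm ⊆ {b} := fun o ho => by
    rcases mem_insert.1 (hSm ho) with rfl | hoWE
    · exact mem_singleton_self o
    · exact absurd hoWE (disjoint_left.1 hSmWE ho)
  refine ⟨(subset_singleton_iff.1 hSm_b).resolve_right fun hSm_eq => hclb ?_, hSp_eq⟩
  rw [← sum_singleton cl b, ← hSm_eq, ← hcl, hSp_eq, sum_insert hhE, hclhE]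

end Configuration

theorem apply_add_one_notMem_image_Icc {O : Type*} [DecidableEq O] {e : ℕ → O} {g : ℕ}
    (he : Set.InjOn e (Set.Icc 1 (g + 1))) : e (g + 1) ∉ (Icc 1 g).image e := by
  simp only [mem_image, mem_Icc, not_exists, not_and]
  intro i hi hei
  have := he ⟨hi.1, by omega⟩ ⟨by omega, le_rfl⟩ hei
  omega

section StandardLattice

variable {O : Type*} [DecidableEq O] {g : ℕ} {ε : ℤ} {u v : ℕ → (ℕ → ℤ) × (ℕ → ℤ)}
  {w : (ℕ → ℤ) × (ℕ → ℤ)} {e : ℕ → O} {ebar h1 e2 : O} {cl : O → (ℕ → ℤ) × (ℕ → ℤ)}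

theorem exists_coordinate_functional (hu : ∀ i, u i = (Pi.single i 1, 0))
    (hv : ∀ i, v i = (0, Pi.single i 1)) (hw : w = -∑ i ∈ Icc 1 g, u i)
    (hinj : Set.InjOn e (Icc 1 g)) (hcle : ∀ i ∈ Icc 1 g, cl (e i) = u i)
    (hcltop : cl (e (g + 1)) = w) (hclh1 : cl h1 = w) (hclbar : cl ebar = ε • v 1)
    (hcle2 : cl e2 = w - ε • v 1) :
    ∀ x ∈ (Icc 1 g).image e, ∃ χ : (ℕ → ℤ) × (ℕ → ℤ) →+ ℤ, χ (cl ebar) = 0 ∧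
      (∀ o ∈ ({h1, e2, e (g + 1)} : Finset O), χ (cl o) = -1) ∧
      ∀ o ∈ (Icc 1 g).image e, χ (cl o) = if o = x then 1 else 0 := by
  refine forall_mem_image.2 fun j hj => ⟨(Pi.evalAddMonoidHom _ j).comp (AddMonoidHom.fst _ _),
    by simp [hclbar, hv], ?_, forall_mem_image.2 fun i hi => ?_⟩
  · have hw1 : w.1 j = -1 := by simp [hw, hu, Prod.fst_sum, Pi.single_apply, hj]
    simp only [mem_insert, mem_singleton]
    rintro o (rfl | rfl | rfl) <;> simp [hclh1, hcle2, hcltop, hv, hw1]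
  · simp [hcle i hi, hu, Pi.single_apply, hinj.eq_iff (mem_coe.2 hi) (mem_coe.2 hj), eq_comm]

end StandardLattice

theorem splitting_top_level_has_no_negative_ends_general (g : ℕ)
    (ε : ℤ) (hε : ε = 1 ∨ ε = -1)
    (u v : ℕ → (ℕ → ℤ) × (ℕ → ℤ))
    (hu : ∀ i, u i = (Pi.single i 1, 0))
    (hv : ∀ i, v i = (0, Pi.single i 1))
    (w : (ℕ → ℤ) × (ℕ → ℤ))
    (hw : w = -∑ i ∈ Icc 1 g, u i)
    (O : Type) [DecidableEq O]
    (e : ℕ → O) (ebar h1 e2 : O)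
    (he : Set.InjOn e (Set.Icc 1 (g+1)))
    (hd1 : ∀ i ∈ Icc 1 (g+1), e i ≠ ebar ∧ e i ≠ h1 ∧ e i ≠ e2)
    (hd2 : ebar ≠ h1) (hd3 : ebar ≠ e2)
    (cl : O → (ℕ → ℤ) × (ℕ → ℤ))
    (hcle : ∀ i ∈ Icc 1 g, cl (e i) = u i)
    (hcltop : cl (e (g+1)) = w)
    (hclh1 : cl h1 = w)
    (hclbar : cl ebar = ε • v 1)
    (hcle2 : cl e2 = w - ε • v 1)
    (A : O → ℝ) (hApos : ∀ o, 0 < A o) (a : ℝ)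
    (hAe : ∀ i ∈ Icc 1 (g+1), A (e i) = a)
    (hAh1 : A h1 < a) (hAe2 : a < A e2)
    (Sp Sm : Finset O)
    (hSp : Sp ⊆ insert h1 ((Icc 1 g).image e))
    (hSm : Sm ⊆ insert ebar (insert h1 (insert e2 ((Icc 1 (g+1)).image e))))
    (hcl : ∑ o ∈ Sp, cl o = ∑ o ∈ Sm, cl o)
    (hA : ∑ o ∈ Sm, A o < ∑ o ∈ Sp, A o) :
    Sm = ∅ ∧ Sp = insert h1 ((Icc 1 g).image e) := by
  set E := (Icc 1 g).image e
  set W : Finset O := {h1, e2, e (g + 1)} with hW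
  have hIcc : Icc 1 g ⊆ Icc 1 (g + 1) := Icc_subset_Icc_right (by omega)
  have hinj : Set.InjOn e (Icc 1 g) :=
    coe_Icc 1 g ▸ he.mono (Set.Icc_subset_Icc_right (by omega))
  have hE : ∀ o ∈ E, o ≠ ebar ∧ o ≠ h1 ∧ o ≠ e2 :=
    forall_mem_image.2 fun i hi => hd1 i (hIcc hi)
  have hWE : Disjoint W E := by
    simpa [hW] using ⟨fun h => (hE h1 h).2.1 rfl, fun h => (hE e2 h).2.2 rfl,
      apply_add_one_notMem_image_Icc he⟩
  have hbW : ebar ∉ W := by simpa [hW, hd2, hd3] using (hd1 (g + 1) (by simp)).1.symm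
  have hbE : ebar ∉ E := fun h => (hE ebar h).1 rfl
  have hSm' : Sm ⊆ insert ebar (W ∪ E) := by
    rw [← insert_Icc_right_eq_Icc_add_one (by omega), image_insert] at hSm
    simpa [hW, insert_union] using hSm
  have hclb : cl ebar ≠ 0 :=
    ne_of_apply_ne (fun c => c.2 1) (by rcases hε with rfl | rfl <;> simp [hclbar, hv])
  have hclP : cl h1 + ∑ o ∈ E, cl o = 0 := by
    rw [hclh1, sum_image hinj, sum_congr rfl hcle, hw, neg_add_cancel]
  have hAW : ∀ o ∈ W, A h1 ≤ A o := by
    simp only [hW, mem_insert, mem_singleton]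
    rintro o (rfl | rfl | rfl)
    · exact le_rfl
    · linarith
    · linarith [hAe (g + 1) (by simp)]
  exact eq_empty_and_eq_insert_of_sum_eq_of_sum_lt hWE hbW hbE (by simp [hW]) hSp hSm'
    (exists_coordinate_functional hu hv hw hinj hcle hcltop hclh1 hclbar hcle2) hclb hclP
    ((hApos h1).trans hAh1).le (hApos ebar).le (hApos h1).le hAW
    (forall_mem_image.2 fun i hi => hAe i (hIcc hi)) hcl hA

/-- the combinatorial core of Lemma 3.7: a level with positive
ends among `e 1, …, e g, h1`, equal total class, and decreasing total action
must have no negative ends and all of `e 1, …, e g, h1` as positive ends. -/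
theorem splitting_top_level_has_no_negative_ends (g : ℕ) (hg : 1 ≤ g)
    (ε : ℤ) (hε : ε = 1 ∨ ε = -1)
    (u v : ℕ → (ℕ → ℤ) × (ℕ → ℤ))
    (hu : ∀ i, u i = (Pi.single i 1, 0))
    (hv : ∀ i, v i = (0, Pi.single i 1))
    (w : (ℕ → ℤ) × (ℕ → ℤ))
    (hw : w = -∑ i ∈ Icc 1 g, u i)
    (O : Type) [DecidableEq O]
    (e : ℕ → O) (ebar h1 e2 : O)
    (he : Set.InjOn e (Set.Icc 1 (g+1)))
    (hd1 : ∀ i ∈ Icc 1 (g+1), e i ≠ ebar ∧ e i ≠ h1 ∧ e i ≠ e2)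
    (hd2 : ebar ≠ h1) (hd3 : ebar ≠ e2) (hd4 : h1 ≠ e2)
    (cl : O → (ℕ → ℤ) × (ℕ → ℤ))
    (hcle : ∀ i ∈ Icc 1 g, cl (e i) = u i)
    (hcltop : cl (e (g+1)) = w)
    (hclh1 : cl h1 = w)
    (hclbar : cl ebar = ε • v 1)
    (hcle2 : cl e2 = w - ε • v 1)
    (A : O → ℝ) (hApos : ∀ o, 0 < A o) (a : ℝ)
    (hAe : ∀ i ∈ Icc 1 (g+1), A (e i) = a)
    (hAh1 : A h1 < a) (hAbar : a < A ebar) (hAe2 : a < A e2)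
    (Sp Sm : Finset O)
    (hSp : Sp ⊆ insert h1 ((Icc 1 g).image e))
    (hSm : Sm ⊆ insert ebar (insert h1 (insert e2 ((Icc 1 (g+1)).image e))))
    (hSpne : Sp.Nonempty)
    (hcl : ∑ o ∈ Sp, cl o = ∑ o ∈ Sm, cl o)
    (hA : ∑ o ∈ Sm, A o < ∑ o ∈ Sp, A o) :
    Sm = ∅ ∧ Sp = insert h1 ((Icc 1 g).image e) :=
  splitting_top_level_has_no_negative_ends_general g ε hε u v hu hv w hw O e ebar h1 e2 he hd1 hd2
    hd3 cl hcle hcltop hclh1 hclbar hcle2 A hApos a hAe hAh1 hAe2 Sp Sm hSp hSm hcl hA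
end

section
/- Let g ≥ 2. Let O consist of pairwise distinct symbols e_1, …, e_g, ē′_1, ẽ′_1, h̃′_1, (e²)′ with class map cl(e_i) = u_i for 1 ≤ i ≤ g, cl(ē′_1) = −v_1, cl(ẽ′_1) = cl(h̃′_1) = u_1 + (v_2 + ⋯ + v_g), and cl((e²)′) = w + (v_3 + ⋯ + v_g) (the sum v_3 + ⋯ + v_g being empty when g = 2), and let A : O → ℝ_{>0} be any action map. Then there is no pair of subsets S⁺ ⊆ {e_1, …, e_g} nonempty and S⁻ ⊆ O with cl(S⁺) = cl(S⁻) and A(S⁻) < A(S⁺). -/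
/-! The `v₂`-coordinate vanishes on `cl(S⁺)` and is nonnegative on every available orbit, equal
to `1` on `ẽ′₁` and `h̃′₁`; so neither of them occurs in `S⁻`. Among the remaining orbits only
`e_j` has positive `u_j`-coordinate, while `cl(S⁺)` has `u_j`-coordinate `1` for each `e_j ∈ S⁺`.
Hence `S⁺ ⊆ S⁻`, and positivity of the action gives `A(S⁺) ≤ A(S⁻)`. -/

open Finset

theorem Finset.mem_of_sum_pos_of_nonpos_of_ne {ι M : Type*} [AddCommMonoid M] [PartialOrder M]
    [IsOrderedAddMonoid M] {s : Finset ι} {f : ι → M} {x : ι}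
    (hf : ∀ i ∈ s, i ≠ x → f i ≤ 0) (hpos : 0 < ∑ i ∈ s, f i) : x ∈ s := by
  by_contra hx
  exact hpos.not_ge (sum_nonpos fun i hi => hf i hi (ne_of_mem_of_not_mem hi hx))

theorem sum_pi_single_one_nonneg (s : Finset ℕ) : 0 ≤ ∑ k ∈ s, Pi.single k (1 : ℤ) :=
  sum_nonneg fun _ _ => Pi.single_nonneg.2 zero_le_one

section
variable {O : Type*} [DecidableEq O] {g : ℕ} {e : ℕ → O} {cl : O → (ℕ → ℤ) × (ℕ → ℤ)}

theorem snd_cl_eq_zero_of_mem_image (hcle : ∀ i ∈ Icc 1 g, cl (e i) = (Pi.single i 1, 0))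
    {o : O} (ho : o ∈ (Icc 1 g).image e) : (cl o).2 = 0 := by
  obtain ⟨i, hi, rfl⟩ := mem_image.mp ho
  simp [hcle i hi]

theorem fst_cl_apply_nonneg_of_mem_image (hcle : ∀ i ∈ Icc 1 g, cl (e i) = (Pi.single i 1, 0))
    {o : O} (ho : o ∈ (Icc 1 g).image e) (j : ℕ) : 0 ≤ (cl o).1 j := by
  obtain ⟨i, hi, rfl⟩ := mem_image.mp ho
  rw [hcle i hi]
  exact (Pi.single_nonneg.2 zero_le_one : (0 : ℕ → ℤ) ≤ Pi.single i 1) j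

variable {ebar' etil' htil' e2' : O}

theorem snd_cl_apply_nonneg (hcle : ∀ i ∈ Icc 1 g, cl (e i) = (Pi.single i 1, 0))
    (hclbar : cl ebar' = -(0, Pi.single 1 1))
    (hcletil : cl etil' = (Pi.single 1 1, 0) + ∑ k ∈ Icc 2 g, (0, Pi.single k 1))
    (hclhtil : cl htil' = (Pi.single 1 1, 0) + ∑ k ∈ Icc 2 g, (0, Pi.single k 1))
    (hcle2 : cl e2' = -∑ i ∈ Icc 1 g, (Pi.single i 1, 0) + ∑ k ∈ Icc 3 g, (0, Pi.single k 1))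
    {o : O} (ho : o ∈ insert ebar' (insert etil' (insert htil' (insert e2' ((Icc 1 g).image e)))))
    {k : ℕ} (hk : k ≠ 1) : 0 ≤ (cl o).2 k := by
  simp only [mem_insert] at ho
  rcases ho with rfl | rfl | rfl | rfl | ho
  · simp [hclbar, hk]
  · simpa [hcletil, Prod.snd_sum] using sum_pi_single_one_nonneg (Icc 2 g) k
  · simpa [hclhtil, Prod.snd_sum] using sum_pi_single_one_nonneg (Icc 2 g) k
  · simpa [hcle2, Prod.snd_sum] using sum_pi_single_one_nonneg (Icc 3 g) k
  · simp [snd_cl_eq_zero_of_mem_image hcle ho]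

theorem fst_cl_apply_nonpos (hcle : ∀ i ∈ Icc 1 g, cl (e i) = (Pi.single i 1, 0))
    (hclbar : cl ebar' = -(0, Pi.single 1 1))
    (hcle2 : cl e2' = -∑ i ∈ Icc 1 g, (Pi.single i 1, 0) + ∑ k ∈ Icc 3 g, (0, Pi.single k 1))
    {o : O} (ho : o ∈ insert ebar' (insert etil' (insert htil' (insert e2' ((Icc 1 g).image e)))))
    (hetil : o ≠ etil') (hhtil : o ≠ htil') {j : ℕ} (hj : o ≠ e j) : (cl o).1 j ≤ 0 := by
  simp only [mem_insert, mem_image, hetil, hhtil, false_or] at ho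
  rcases ho with rfl | rfl | ⟨i, hi, rfl⟩
  · simp [hclbar]
  · simpa [hcle2, Prod.fst_sum] using sum_pi_single_one_nonneg (Icc 1 g) j
  · have hij : j ≠ i := by rintro rfl; exact hj rfl
    simp [hcle i hi, hij]
end

theorem splitting_exclusion_primed_handle_general (g : ℕ) (hg : 2 ≤ g)
    (u v : ℕ → (ℕ → ℤ) × (ℕ → ℤ))
    (hu : ∀ i, u i = (Pi.single i 1, 0))
    (hv : ∀ i, v i = (0, Pi.single i 1))
    (w : (ℕ → ℤ) × (ℕ → ℤ))
    (hw : w = -∑ i ∈ Icc 1 g, u i)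
    (O : Type) [DecidableEq O]
    (e : ℕ → O) (ebar' etil' htil' e2' : O)
    (cl : O → (ℕ → ℤ) × (ℕ → ℤ))
    (hcle : ∀ i ∈ Icc 1 g, cl (e i) = u i)
    (hclbar : cl ebar' = -v 1)
    (hcletil : cl etil' = u 1 + ∑ k ∈ Icc 2 g, v k)
    (hclhtil : cl htil' = u 1 + ∑ k ∈ Icc 2 g, v k)
    (hcle2 : cl e2' = w + ∑ k ∈ Icc 3 g, v k)
    (A : O → ℝ) (hApos : ∀ o, 0 < A o) :
    ¬ ∃ Sp Sm : Finset O,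
        Sp ⊆ (Icc 1 g).image e ∧ Sp.Nonempty ∧
        Sm ⊆ insert ebar' (insert etil' (insert htil' (insert e2' ((Icc 1 g).image e)))) ∧
        ∑ o ∈ Sp, cl o = ∑ o ∈ Sm, cl o ∧
        ∑ o ∈ Sm, A o < ∑ o ∈ Sp, A o := by
  subst hw
  simp only [hu, hv] at hcle hclbar hcletil hclhtil hcle2
  rintro ⟨Sp, Sm, hSp, -, hSm, hcl, hA⟩
  have hfst (j : ℕ) : ∑ o ∈ Sp, (cl o).1 j = ∑ o ∈ Sm, (cl o).1 j := by
    simpa [Prod.fst_sum, Finset.sum_apply] using congrFun (congrArg Prod.fst hcl) j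
  have hsnd (k : ℕ) : ∑ o ∈ Sp, (cl o).2 k = ∑ o ∈ Sm, (cl o).2 k := by
    simpa [Prod.snd_sum, Finset.sum_apply] using congrFun (congrArg Prod.snd hcl) k
  have hSm_snd_zero : ∀ o ∈ Sm, (cl o).2 2 = 0 := by
    refine (sum_eq_zero_iff_of_nonneg fun o ho => ?_).1 ?_
    · exact snd_cl_apply_nonneg hcle hclbar hcletil hclhtil hcle2 (hSm ho) (by norm_num)
    · rw [← hsnd]
      exact sum_eq_zero fun o ho => by simp [snd_cl_eq_zero_of_mem_image hcle (hSp ho)]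
  have hnotMem (o : O) (hclo : cl o = (Pi.single 1 1, 0) + ∑ k ∈ Icc 2 g, (0, Pi.single k 1)) :
      o ∉ Sm := fun h => by
    simpa [hclo, hg, Prod.snd_sum, Finset.sum_apply, Pi.single_apply] using hSm_snd_zero o h
  have hsub : Sp ⊆ Sm := by
    intro x hx
    obtain ⟨j, hj, rfl⟩ := mem_image.mp (hSp hx)
    refine mem_of_sum_pos_of_nonpos_of_ne (f := fun o => (cl o).1 j) (fun o ho hne => ?_) ?_
    · exact fst_cl_apply_nonpos hcle hclbar hcle2 (hSm ho)
        (ne_of_mem_of_not_mem ho (hnotMem _ hcletil))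
        (ne_of_mem_of_not_mem ho (hnotMem _ hclhtil)) hne
    · rw [← hfst]
      exact sum_pos' (fun o ho => fst_cl_apply_nonneg_of_mem_image hcle (hSp ho) j)
        ⟨e j, hx, by simp [hcle j hj]⟩
  exact hA.not_ge (sum_le_sum_of_subset_of_nonneg hsub fun o _ _ => (hApos o).le)

/-- the exclusion of the primed handle `(N²_1)'` in the proof of
Lemma 3.7: with the indicated homology classes there is no pair of subsets
`S⁺ ⊆ {e 1, …, e g}` nonempty, `S⁻ ⊆ O` with equal total class and strictly
decreasing total action. -/
theorem splitting_exclusion_primed_handle (g : ℕ) (hg : 2 ≤ g)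
    (u v : ℕ → (ℕ → ℤ) × (ℕ → ℤ))
    (hu : ∀ i, u i = (Pi.single i 1, 0))
    (hv : ∀ i, v i = (0, Pi.single i 1))
    (w : (ℕ → ℤ) × (ℕ → ℤ))
    (hw : w = -∑ i ∈ Icc 1 g, u i)
    (O : Type) [DecidableEq O]
    (e : ℕ → O) (ebar' etil' htil' e2' : O)
    (he : Set.InjOn e (Set.Icc 1 g))
    (hd1 : ∀ i ∈ Icc 1 g, e i ≠ ebar' ∧ e i ≠ etil' ∧ e i ≠ htil' ∧ e i ≠ e2')
    (hd2 : ebar' ≠ etil') (hd3 : ebar' ≠ htil') (hd4 : ebar' ≠ e2')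
    (hd5 : etil' ≠ htil') (hd6 : etil' ≠ e2') (hd7 : htil' ≠ e2')
    (cl : O → (ℕ → ℤ) × (ℕ → ℤ))
    (hcle : ∀ i ∈ Icc 1 g, cl (e i) = u i)
    (hclbar : cl ebar' = -v 1)
    (hcletil : cl etil' = u 1 + ∑ k ∈ Icc 2 g, v k)
    (hclhtil : cl htil' = u 1 + ∑ k ∈ Icc 2 g, v k)
    (hcle2 : cl e2' = w + ∑ k ∈ Icc 3 g, v k)
    (A : O → ℝ) (hApos : ∀ o, 0 < A o) :
    ¬ ∃ Sp Sm : Finset O,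
        Sp ⊆ (Icc 1 g).image e ∧ Sp.Nonempty ∧
        Sm ⊆ insert ebar' (insert etil' (insert htil' (insert e2' ((Icc 1 g).image e)))) ∧
        ∑ o ∈ Sp, cl o = ∑ o ∈ Sm, cl o ∧
        ∑ o ∈ Sm, A o < ∑ o ∈ Sp, A o :=
  splitting_exclusion_primed_handle_general g hg u v hu hv w hw O e ebar' etil' htil' e2' cl hcle
    hclbar hcletil hclhtil hcle2 A hApos
end
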